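/- Let G be a finite simple graph with n = |V(G)| vertices and adjacency matrix A over 𝔽₂, and define ψ(G) = 2^{-2n} · Σ_{U ⊆ V(G)} (-1/2)^{n-|U|} · 2^{corank(A(G|_U))}. Then ψ(G) = 2^{-3n} · Σ_x (-1)^{|supp(A·x)|} · 2^{|supp(x)|}, where the sum is over all vectors x ∈ 𝔽₂^{V(G)} satisfying supp(x) ⊆ S(x), with supp(x) = { i ∈ V(G) : x_i = 1 } and S(x) = { i ∈ V(G) : (A·x)_i = 0 }. -/

import Mathlib

open Finset

/-- The adjacency matrix over `𝔽₂` of the subgraph of `G` induced by the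
vertex subset `U`. -/
def adjMatrixOn {V : Type*} [Fintype V] [DecidableEq V] (G : SimpleGraph V)
    [DecidableRel G.Adj] (U : Finset V) : Matrix U U (ZMod 2) :=
  Matrix.of fun i j => if G.Adj (i : V) (j : V) then 1 else 0

/-- The corank over `𝔽₂` of a square matrix over `𝔽₂`, i.e. the dimension
of its kernel. -/
noncomputable def corank {m : Type*} [Fintype m] [DecidableEq m]
    (M : Matrix m m (ZMod 2)) : ℕ :=
  Module.finrank (ZMod 2) (LinearMap.ker M.mulVecLin)

/-- The support of a vector over `𝔽₂`: the set of coordinates equal to `1`. -/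
def supp {V : Type*} [Fintype V] [DecidableEq V] (x : V → ZMod 2) : Finset V :=
  Finset.univ.filter (fun i => x i = 1)

/-!
Since `2 ^ corank A(G|_U)` counts the kernel of `A(G|_U)`, it is the number of vectors `x`
with `supp x ⊆ U ⊆ S(x)`, where `S(x) = (supp (A x))ᶜ`. Exchanging the sums over `U` and `x`,
each `x` with `supp x ⊆ S(x)` contributes
`∑_{supp x ⊆ U ⊆ S(x)} (-1/2)^|Uᶜ| = (-1/2)^|supp (A x)| · (1/2)^|S(x) \ supp x|`
(substitute `U ↦ Uᶜ` and use the binomial theorem), which is the claimed summand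
because `|V| = |supp (A x)| + |supp x| + |S(x) \ supp x|`.
-/

theorem two_zpow_mul_neg_half_pow_mul_half_pow (m s d : ℕ) :
    (2 : ℚ) ^ (-(2 * ((m + s + d : ℕ) : ℤ))) * ((-1 / 2) ^ m * (-1 / 2 + 1) ^ d) =
      2 ^ (-(3 * ((m + s + d : ℕ) : ℤ))) * ((-1) ^ m * 2 ^ s) := by
  simp only [zpow_neg, mul_comm _ ((m + s + d : ℕ) : ℤ), zpow_mul, zpow_natCast,
    zpow_ofNat]
  rw [show -(1 : ℚ) / 2 + 1 = 1 / 2 by norm_num, div_pow, div_pow, one_pow]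
  field_simp
  ring

theorem sum_Icc_pow_card {α R : Type*} [DecidableEq α] [CommSemiring R] {s t : Finset α}
    (h : s ⊆ t) (c : R) : ∑ u ∈ Icc s t, c ^ #u = c ^ #s * (c + 1) ^ #(t \ s) := by
  have hdisj : ∀ u ∈ (t \ s).powerset, Disjoint s u := fun u hu =>
    disjoint_sdiff.mono_right (mem_powerset.1 hu)
  rw [Icc_eq_image_powerset h, sum_image fun u hu v hv huv => ?_, ← sum_pow_mul_eq_add_pow,
    mul_sum]
  · refine sum_congr rfl fun u hu => ?_
    rw [card_union_of_disjoint (hdisj u hu), pow_add, one_pow, mul_one]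
  · rw [← union_sdiff_cancel_left (hdisj u hu), ← union_sdiff_cancel_left (hdisj v hv)]
    exact congrArg (· \ s) huv

theorem sum_Icc_pow_card_compl {α R : Type*} [Fintype α] [DecidableEq α] [CommSemiring R]
    {s t : Finset α} (h : s ⊆ t) (c : R) :
    ∑ u ∈ Icc s t, c ^ #uᶜ = c ^ #tᶜ * (c + 1) ^ #(t \ s) := by
  rw [← compl_sdiff_compl, ← sum_Icc_pow_card (compl_subset_compl.2 h)]
  refine sum_nbij' compl compl (fun u hu => ?_) (fun u hu => ?_) (fun u _ => compl_compl u)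
    (fun u _ => compl_compl u) fun u _ => rfl
  · obtain ⟨hsu, hut⟩ := mem_Icc.1 hu
    exact mem_Icc.2 ⟨compl_subset_compl.2 hut, compl_subset_compl.2 hsu⟩
  · obtain ⟨htu, hus⟩ := mem_Icc.1 hu
    exact mem_Icc.2 ⟨le_compl_comm.1 hus, compl_le_iff_compl_le.1 htu⟩

open Matrix

section Submatrix

variable {n R : Type*} [Fintype n] [CommSemiring R]

theorem submatrix_mulVec_restrict (M : Matrix n n R) (U : Finset n) {x : n → R}
    (hx : ∀ v ∉ U, x v = 0) (i : U) :
    (M.submatrix (↑) (↑) *ᵥ fun u : U => x u) i = (M *ᵥ x) i := by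
  simp only [mulVec, dotProduct, submatrix_apply]
  rw [sum_coe_sort U fun v => M i v * x v]
  exact sum_subset U.subset_univ fun v _ hv => by rw [hx v hv, mul_zero]

def kerSubmatrixEquiv [DecidableEq n] (M : Matrix n n R) (U : Finset n) :
    LinearMap.ker (M.submatrix ((↑) : U → n) ((↑) : U → n)).mulVecLin ≃
      {x : n → R // (∀ v ∉ U, x v = 0) ∧ ∀ i ∈ U, (M *ᵥ x) i = 0} where
  toFun y := ⟨fun v => if h : v ∈ U then y.1 ⟨v, h⟩ else 0, fun v hv => dif_neg hv,
    fun i hi => by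
      rw [← submatrix_mulVec_restrict M U (fun v hv => dif_neg hv) ⟨i, hi⟩]
      simp only [coe_mem, ↓reduceDIte, Subtype.coe_eta]
      exact congrFun (LinearMap.mem_ker.1 y.2) ⟨i, hi⟩⟩
  invFun x := ⟨fun u => x.1 u, LinearMap.mem_ker.2 <| funext fun i => by
    simpa [submatrix_mulVec_restrict M U x.2.1] using x.2.2 i i.2⟩
  left_inv y := Subtype.ext <| funext fun u => dif_pos u.2
  right_inv x := Subtype.ext <| funext fun v => by
    by_cases h : v ∈ U
    · exact dif_pos h
    · exact (dif_neg h).trans (x.2.1 v h).symm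

theorem two_pow_corank_submatrix [DecidableEq n] (M : Matrix n n (ZMod 2)) (U : Finset n) :
    2 ^ corank (M.submatrix ((↑) : U → n) ((↑) : U → n)) =
      #{x | (∀ v ∉ U, x v = 0) ∧ ∀ i ∈ U, (M *ᵥ x) i = 0} := by
  have : Fintype (LinearMap.ker (M.submatrix ((↑) : U → n) ((↑) : U → n)).mulVecLin) :=
    Fintype.ofFinite _
  rw [← Fintype.card_subtype, ← Fintype.card_congr (kerSubmatrixEquiv M U),
    Module.card_eq_pow_finrank (K := ZMod 2), ZMod.card, corank]

end Submatrix

theorem zmod_two_ne_one_iff {a : ZMod 2} : a ≠ 1 ↔ a = 0 := by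
  revert a; decide

section Supp

variable {V : Type*} [Fintype V] [DecidableEq V]

theorem mem_supp {x : V → ZMod 2} {i : V} : i ∈ supp x ↔ x i = 1 := by
  simp [supp]

theorem supp_subset_iff {x : V → ZMod 2} {U : Finset V} : supp x ⊆ U ↔ ∀ v ∉ U, x v = 0 := by
  simp only [subset_iff, mem_supp]
  exact ⟨fun h v hv => zmod_two_ne_one_iff.1 fun hx => hv (h hx),
    fun h v hx => by_contra fun hv => zero_ne_one ((h v hv).symm.trans hx)⟩

theorem subset_compl_supp_iff {x : V → ZMod 2} {U : Finset V} :
    U ⊆ (supp x)ᶜ ↔ ∀ i ∈ U, x i = 0 := by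
  simp only [subset_iff, mem_compl, mem_supp, zmod_two_ne_one_iff]

theorem supp_subset_compl_supp_iff {x y : V → ZMod 2} :
    supp x ⊆ (supp y)ᶜ ↔ ∀ i, x i = 1 → y i = 0 := by
  simp only [subset_compl_supp_iff, mem_supp]

end Supp

section Graph

variable {V : Type*} [Fintype V] [DecidableEq V] (G : SimpleGraph V) [DecidableRel G.Adj]

theorem adjMatrixOn_eq_submatrix (U : Finset V) :
    adjMatrixOn G U = (G.adjMatrix (ZMod 2)).submatrix ((↑) : U → V) ((↑) : U → V) := by
  ext; simp [adjMatrixOn, SimpleGraph.adjMatrix_apply]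

theorem two_pow_corank_adjMatrixOn (U : Finset V) :
    2 ^ corank (adjMatrixOn G U) =
      #{x | supp x ⊆ U ∧ U ⊆ (supp (G.adjMatrix (ZMod 2) *ᵥ x))ᶜ} := by
  simp only [adjMatrixOn_eq_submatrix, two_pow_corank_submatrix, supp_subset_iff,
    subset_compl_supp_iff]

end Graph

theorem psi_eq_vector_sum {V : Type*} [Fintype V] [DecidableEq V]
    (G : SimpleGraph V) [DecidableRel G.Adj] :
    (2 : ℚ) ^ (-(2 * (Fintype.card V : ℤ))) *
      ∑ U ∈ (Finset.univ : Finset V).powerset,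
        (-(1 : ℚ) / 2) ^ (Fintype.card V - U.card) *
          (2 : ℚ) ^ corank (adjMatrixOn G U)
    =
    (2 : ℚ) ^ (-(3 * (Fintype.card V : ℤ))) *
      ∑ x ∈ (Finset.univ : Finset (V → ZMod 2)).filter
          (fun x => ∀ i : V, x i = 1 → (G.adjMatrix (ZMod 2)).mulVec x i = 0),
        (-1 : ℚ) ^ (supp ((G.adjMatrix (ZMod 2)).mulVec x)).card *
          (2 : ℚ) ^ (supp x).card := by
  set A := G.adjMatrix (ZMod 2)
  have hcorank (U : Finset V) : (2 : ℚ) ^ corank (adjMatrixOn G U) =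
      ∑ x ∈ univ with supp x ⊆ U ∧ U ⊆ (supp (A *ᵥ x))ᶜ, 1 := by
    rw [sum_const, nsmul_one, ← two_pow_corank_adjMatrixOn]; norm_cast
  have hswap : ∑ U ∈ (univ : Finset V).powerset,
        (-(1 : ℚ) / 2) ^ (Fintype.card V - #U) * 2 ^ corank (adjMatrixOn G U)
      = ∑ x ∈ univ with ∀ i, x i = 1 → (A *ᵥ x) i = 0,
          ∑ U ∈ Icc (supp x) (supp (A *ᵥ x))ᶜ, (-(1 : ℚ) / 2) ^ #Uᶜ := by
    simp_rw [hcorank, mul_sum, mul_one, ← card_compl]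
    refine sum_comm' fun U x => ?_
    simp only [mem_powerset, subset_univ, mem_filter, mem_univ, true_and, mem_Icc]
    exact ⟨fun h => ⟨h, supp_subset_compl_supp_iff.1 (h.1.trans h.2)⟩, And.left⟩
  rw [hswap, mul_sum, mul_sum]
  refine sum_congr rfl fun x hx => ?_
  have hsub : supp x ⊆ (supp (A *ᵥ x))ᶜ := supp_subset_compl_supp_iff.2 (mem_filter.1 hx).2
  have hcard : Fintype.card V =
      #(supp (A *ᵥ x)) + #(supp x) + #((supp (A *ᵥ x))ᶜ \ supp x) := by
    have hle := card_le_card hsub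
    have hm := card_le_univ (supp (A *ᵥ x))
    rw [card_compl] at hle
    rw [card_sdiff_of_subset hsub, card_compl]
    omega
  rw [sum_Icc_pow_card_compl hsub, compl_compl, hcard]
  exact two_zpow_mul_neg_half_pow_mul_half_pow _ _ _
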